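/- Let n > m > 1 be real and let η > 0. Suppose A* : (1, 1+η) → (0,∞) is such that, setting δ*(σ) = σ/(2A*(σ)), one has δ*(σ) ∈ (0, 1/2) for all σ, δ*(σ) → 0 as σ → 1⁺, and for every σ ∈ (1, 1+η) the equation (A*(σ))^{m−n} = 2^{n−m}·[ ζ(m+1, 1−δ*(σ)) − ζ(m+1, δ*(σ)) ] / [ ζ(n+1, 1−δ*(σ)) − ζ(n+1, δ*(σ)) ] holds. Then lim_{σ→1⁺} A*(σ)·(σ−1)^{1/(m+2)} = (1/2)·( 2(m+1)·ζ(m+2)/(n−m) )^{1/(m+2)}; in particular A*(σ) diverges as σ → 1⁺ with the non-universal critical exponent 1/(m+2). -/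

import Mathlib

open Real Filter

/-- The Riemann zeta function `ζ(s) = Σ_{j=1}^∞ j^{-s}` for real `s > 1`. -/
noncomputable def rzeta (s : ℝ) : ℝ := ∑' j : ℕ, ((j : ℝ) + 1) ^ (-s)

/-- The Hurwitz zeta function `ζ(s,q) = Σ_{j=0}^∞ (j+q)^{-s}` for real `s > 1`, `q > 0`. -/
noncomputable def hzeta (s q : ℝ) : ℝ := ∑' j : ℕ, ((j : ℝ) + q) ^ (-s)

/-!
With `δ = σ / (2 A*)`, the reflected Hurwitz difference splits off its pole:
`ζ(s, 1 - δ) - ζ(s, δ) = G_s(δ) - δ^{-s}` with `G_s(δ) = centralDiffSum s δ = Σ_{j ≥ 1} ((j - δ)^{-s} - (j + δ)^{-s})`,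
and `G_s(δ) / δ → 2 s ζ(s + 1)` by dominated convergence of the central difference quotients.
Since `A* = σ / (2δ)`, the defining equation becomes
`(1 - σ^{m-n}) / δ^{m+2} = G_{m+1}(δ) / δ - σ^{m-n} δ^{n-m} G_{n+1}(δ) / δ → 2 (m + 1) ζ(m + 2)`,
while `(1 - σ^{m-n}) / (σ - 1) → n - m`. Hence `(σ - 1) / δ^{m+2} → 2 (m + 1) ζ(m + 2) / (n - m)`,
and `A* (σ - 1)^{1/(m+2)} = (σ / 2) ((σ - 1) / δ^{m+2})^{1/(m+2)}`.
-/

open Topology Set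

lemma summable_nat_add_rpow_neg {s q : ℝ} (hs : 1 < s) (hq : 0 < q) :
    Summable (fun j : ℕ => ((j : ℝ) + q) ^ (-s)) :=
  ((summable_one_div_nat_add_rpow q s).2 hs).congr fun j => by
    have hjq : 0 < (j : ℝ) + q := by positivity
    rw [abs_of_pos hjq, one_div, rpow_neg hjq.le]

lemma HasDerivAt.tendsto_central_diff_div_right {f : ℝ → ℝ} {f' a : ℝ} (hf : HasDerivAt f f' a) :
    Tendsto (fun h => (f (a + h) - f (a - h)) / h) (𝓝[>] 0) (𝓝 (2 * f')) := by
  have hplus : HasDerivAt (fun h => f (a + h)) f' 0 :=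
    HasDerivAt.comp_const_add a 0 (by rwa [add_zero])
  have hminus : HasDerivAt (fun h => f (a - h)) (-f') 0 :=
    HasDerivAt.comp_const_sub a 0 (by rwa [sub_zero])
  rw [two_mul, ← sub_neg_eq_add]
  refine (hplus.sub hminus).tendsto_slope_zero_right.congr fun h => ?_
  simp [div_eq_inv_mul]

lemma tendsto_rpow_neg_central_diff_div_right (s : ℝ) {a : ℝ} (ha : 0 < a) :
    Tendsto (fun δ => ((a - δ) ^ (-s) - (a + δ) ^ (-s)) / δ) (𝓝[>] 0)
      (𝓝 (2 * s * a ^ (-(s + 1)))) := by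
  have h := (hasDerivAt_rpow_const (p := -s) (Or.inl ha.ne')).tendsto_central_diff_div_right.neg
  convert h using 2 with δ
  · ring
  · rw [show -s - 1 = -(s + 1) by ring]; ring

lemma rpow_neg_sub_rpow_neg_le {s a δ : ℝ} (hs : 0 < s) (hδ : 0 < δ) (hδa : δ ≤ a / 2) :
    (a - δ) ^ (-s) - (a + δ) ^ (-s) ≤ 2 ^ (s + 2) * s * a ^ (-(s + 1)) * δ := by
  have ha : 0 < a - δ := by linarith
  obtain ⟨c, ⟨hc, -⟩, hmvt⟩ := exists_hasDerivAt_eq_slope (fun x => x ^ (-s))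
    (fun x => -s * x ^ (-s - 1)) (show a - δ < a + δ by linarith)
    (fun x hx => (continuousAt_rpow_const x (-s) (Or.inl (ha.trans_le hx.1).ne')).continuousWithinAt)
    (fun x hx => hasDerivAt_rpow_const (Or.inl (ha.trans hx.1).ne'))
  have hdiff : (a - δ) ^ (-s) - (a + δ) ^ (-s) = 2 * δ * s * c ^ (-(s + 1)) := by
    rw [eq_div_iff (by linarith), show -s - 1 = -(s + 1) by ring] at hmvt
    linear_combination hmvt
  have hc : c ^ (-(s + 1)) ≤ (a / 2) ^ (-(s + 1)) :=
    rpow_le_rpow_of_nonpos (by linarith) (by linarith) (by linarith)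
  have hhalf : (a / 2) ^ (-(s + 1)) = 2 ^ (s + 1) * a ^ (-(s + 1)) := by
    rw [div_rpow (by linarith) zero_le_two, rpow_neg zero_le_two, div_inv_eq_mul, mul_comm]
  rw [hdiff, show (2 : ℝ) ^ (s + 2) = 2 * 2 ^ (s + 1) by
    rw [show s + 2 = 1 + (s + 1) by ring, rpow_add two_pos, rpow_one]]
  calc 2 * δ * s * c ^ (-(s + 1)) ≤ 2 * δ * s * (a / 2) ^ (-(s + 1)) := by gcongr
    _ = _ := by rw [hhalf]; ring

noncomputable def centralDiffSum (s δ : ℝ) : ℝ :=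
  ∑' j : ℕ, (((j : ℝ) + 1 - δ) ^ (-s) - ((j : ℝ) + 1 + δ) ^ (-s))

lemma hzeta_one_sub_sub_hzeta {s δ : ℝ} (hs : 1 < s) (hδ : δ ∈ Ioo (0 : ℝ) 1) :
    hzeta s (1 - δ) - hzeta s δ = centralDiffSum s δ - δ ^ (-s) := by
  have hlow : Summable (fun j : ℕ => ((j : ℝ) + (1 - δ)) ^ (-s)) :=
    summable_nat_add_rpow_neg hs (by linarith [hδ.2])
  have hhigh : Summable (fun j : ℕ => ((j : ℝ) + (1 + δ)) ^ (-s)) :=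
    summable_nat_add_rpow_neg hs (by linarith [hδ.1])
  have hshift : hzeta s δ = δ ^ (-s) + ∑' j : ℕ, ((j : ℝ) + (1 + δ)) ^ (-s) := by
    rw [hzeta, (summable_nat_add_rpow_neg hs hδ.1).tsum_eq_zero_add]
    simp only [Nat.cast_zero, zero_add, Nat.cast_add, Nat.cast_one, add_assoc]
  have hsplit : centralDiffSum s δ =
      ∑' j : ℕ, ((j : ℝ) + (1 - δ)) ^ (-s) - ∑' j : ℕ, ((j : ℝ) + (1 + δ)) ^ (-s) := by
    rw [← hlow.tsum_sub hhigh, centralDiffSum]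
    simp only [add_sub_assoc, add_assoc]
  rw [hshift, hsplit, hzeta]
  ring

lemma tendsto_centralDiffSum_div {s : ℝ} (hs : 1 < s) :
    Tendsto (fun δ => centralDiffSum s δ / δ) (𝓝[>] 0) (𝓝 (2 * s * rzeta (s + 1))) := by
  have hbound : Summable (fun j : ℕ => 2 ^ (s + 2) * s * ((j : ℝ) + 1) ^ (-(s + 1))) :=
    (summable_nat_add_rpow_neg (by linarith) one_pos).mul_left _
  have hlim := tendsto_tsum_of_dominated_convergence hbound
    (fun j => tendsto_rpow_neg_central_diff_div_right s (a := (j : ℝ) + 1) (by positivity)) ?_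
  · convert hlim using 2 with δ
    · rw [centralDiffSum, tsum_div_const]
    · rw [rzeta, tsum_mul_left]
  filter_upwards [Ioo_mem_nhdsGT (show (0 : ℝ) < 1 / 2 by norm_num)] with δ ⟨hδ, hδ'⟩ j
  have hj : 0 ≤ (j : ℝ) := j.cast_nonneg
  have hnonneg : 0 ≤ ((j : ℝ) + 1 - δ) ^ (-s) - ((j : ℝ) + 1 + δ) ^ (-s) :=
    sub_nonneg.2 (rpow_le_rpow_of_nonpos (by linarith) (by linarith) (by linarith))
  rw [norm_of_nonneg (div_nonneg hnonneg hδ.le), div_le_iff₀ hδ]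
  exact rpow_neg_sub_rpow_neg_le (by linarith) hδ (by linarith)

lemma tendsto_rpow_sub_one_div_sub_one_right (p : ℝ) :
    Tendsto (fun x => (x ^ p - 1) / (x - 1)) (𝓝[>] 1) (𝓝 p) := by
  have h := (hasDerivAt_rpow_const (x := 1) (p := p) (Or.inl one_ne_zero)).tendsto_slope.mono_left
    (nhdsGT_le_nhdsNE 1)
  rw [one_rpow, mul_one] at h
  exact h.congr fun x => by rw [slope_def_field, one_rpow]

lemma balance_of_hardcore_eq {m n σ A : ℝ} (hm : 0 < m) (hn : 0 < n) (hσ : 0 < σ)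
    (hδ : σ / (2 * A) ∈ Ioo (0 : ℝ) (1 / 2))
    (heq : A ^ (m - n) = 2 ^ (n - m) *
      (hzeta (m + 1) (1 - σ / (2 * A)) - hzeta (m + 1) (σ / (2 * A))) /
      (hzeta (n + 1) (1 - σ / (2 * A)) - hzeta (n + 1) (σ / (2 * A)))) :
    (1 - σ ^ (m - n)) / (σ / (2 * A)) ^ (m + 2) =
      centralDiffSum (m + 1) (σ / (2 * A)) / (σ / (2 * A)) - σ ^ (m - n) *
        (σ / (2 * A)) ^ (n - m) * (centralDiffSum (n + 1) (σ / (2 * A)) / (σ / (2 * A))) := by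
  set δ := σ / (2 * A) with hδA
  obtain ⟨hδ0, hδ1⟩ := hδ
  have hA : 0 < A := by linarith [(div_pos_iff_of_pos_left hσ).1 hδ0]
  have hApow : A ^ (m - n) = 2 ^ (n - m) * (σ ^ (m - n) * δ ^ (n - m)) := by
    rw [show A = σ * (2 * δ)⁻¹ by rw [hδA]; field_simp, mul_rpow hσ.le (by positivity),
      inv_rpow (by positivity), ← rpow_neg (by positivity), neg_sub, mul_rpow zero_le_two hδ0.le]
    ring
  -- a vanishing denominator would make the right side of `heq` the junk value `0`
  have hFn : hzeta (n + 1) (1 - δ) - hzeta (n + 1) δ ≠ 0 :=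
    (div_ne_zero_iff.1 (heq ▸ (rpow_pos_of_pos hA (m - n)).ne')).2
  have hrel : hzeta (m + 1) (1 - δ) - hzeta (m + 1) δ =
      σ ^ (m - n) * δ ^ (n - m) * (hzeta (n + 1) (1 - δ) - hzeta (n + 1) δ) := by
    rw [hApow, eq_div_iff hFn] at heq
    apply mul_left_cancel₀ (by positivity : (2 : ℝ) ^ (n - m) ≠ 0)
    linear_combination -heq
  rw [hzeta_one_sub_sub_hzeta (by linarith) ⟨hδ0, by linarith⟩,
    hzeta_one_sub_sub_hzeta (by linarith) ⟨hδ0, by linarith⟩] at hrel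
  have hpow : δ ^ (n - m) * δ ^ (-(n + 1)) = (δ ^ (m + 1))⁻¹ := by
    rw [← rpow_add hδ0, ← rpow_neg hδ0.le]; ring_nf
  rw [rpow_neg hδ0.le] at hrel
  rw [show m + 2 = (m + 1) + 1 by ring, rpow_add hδ0, rpow_one]
  have hX : 0 < δ ^ (m + 1) := rpow_pos_of_pos hδ0 _
  field_simp
  field_simp at hrel hpow
  linear_combination -hrel + σ ^ (m - n) * hpow

lemma tendsto_sub_one_div_rpow_of_balance {m n : ℝ} (hm : 0 < m) (hnm : m < n) {δ : ℝ → ℝ}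
    (hδ : Tendsto δ (𝓝[>] 1) (𝓝[>] 0))
    (hbal : ∀ᶠ σ in 𝓝[>] 1, (1 - σ ^ (m - n)) / δ σ ^ (m + 2) =
      centralDiffSum (m + 1) (δ σ) / δ σ -
        σ ^ (m - n) * δ σ ^ (n - m) * (centralDiffSum (n + 1) (δ σ) / δ σ)) :
    Tendsto (fun σ => (σ - 1) / δ σ ^ (m + 2)) (𝓝[>] 1)
      (𝓝 (2 * (m + 1) * rzeta (m + 2) / (n - m))) := by
  have hpow : Tendsto (fun σ : ℝ => σ ^ (m - n)) (𝓝[>] 1) (𝓝 1) := by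
    simpa using (continuousAt_rpow_const 1 (m - n) (Or.inl one_ne_zero)).tendsto.mono_left
      nhdsWithin_le_nhds
  have hδpow : Tendsto (fun σ => δ σ ^ (n - m)) (𝓝[>] 1) (𝓝 0) := by
    simpa [zero_rpow (sub_pos.2 hnm).ne'] using
      (hδ.mono_right nhdsWithin_le_nhds).rpow_const (Or.inr (sub_pos.2 hnm).le)
  have hm' := (tendsto_centralDiffSum_div (s := m + 1) (by linarith)).comp hδ
  have hn' := (tendsto_centralDiffSum_div (s := n + 1) (by linarith)).comp hδ
  rw [show m + 1 + 1 = m + 2 by ring] at hm'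
  have hrhs := hm'.sub ((hpow.mul hδpow).mul hn')
  rw [mul_zero, zero_mul, sub_zero] at hrhs
  have hratio : Tendsto (fun σ : ℝ => (σ - 1) / (1 - σ ^ (m - n))) (𝓝[>] 1) (𝓝 (n - m)⁻¹) := by
    have h := ((tendsto_rpow_sub_one_div_sub_one_right (m - n)).inv₀
      (sub_ne_zero.2 hnm.ne)).neg
    rw [← inv_neg, neg_sub] at h
    refine h.congr fun σ => ?_
    rw [inv_div, ← div_neg, neg_sub]
  have hlim := hratio.mul hrhs
  rw [inv_mul_eq_div] at hlim
  refine hlim.congr' ?_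
  filter_upwards [hbal, self_mem_nhdsWithin] with σ hσ (hσ1 : 1 < σ)
  have hne : 1 - σ ^ (m - n) ≠ 0 :=
    (sub_pos.2 (rpow_lt_one_of_one_lt_of_neg hσ1 (by linarith))).ne'
  simp only [Function.comp_apply] at hσ ⊢
  rw [← hσ, div_mul_div_cancel₀ hne]

theorem hardcore_Astar_asymptotics_general
    (n m η : ℝ) (hm : 1 < m) (hnm : m < n) (hη : 0 < η)
    (Astar : ℝ → ℝ)
    (hδmem : ∀ σ ∈ Set.Ioo (1 : ℝ) (1 + η),
      σ / (2 * Astar σ) ∈ Set.Ioo (0 : ℝ) (1 / 2))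
    (hδ0 : Tendsto (fun σ : ℝ => σ / (2 * Astar σ))
      (nhdsWithin 1 (Set.Ioi 1)) (nhds 0))
    (heq : ∀ σ ∈ Set.Ioo (1 : ℝ) (1 + η),
      (Astar σ) ^ (m - n) = 2 ^ (n - m) *
        (hzeta (m + 1) (1 - σ / (2 * Astar σ)) - hzeta (m + 1) (σ / (2 * Astar σ))) /
        (hzeta (n + 1) (1 - σ / (2 * Astar σ)) - hzeta (n + 1) (σ / (2 * Astar σ)))) :
    Tendsto (fun σ : ℝ => Astar σ * (σ - 1) ^ (1 / (m + 2)))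
      (nhdsWithin 1 (Set.Ioi 1))
      (nhds ((1 / 2) * (2 * (m + 1) * rzeta (m + 2) / (n - m)) ^ (1 / (m + 2)))) ∧
    Tendsto Astar (nhdsWithin 1 (Set.Ioi 1)) atTop := by
  have hnear : ∀ᶠ σ in 𝓝[>] (1 : ℝ), σ ∈ Ioo 1 (1 + η) := Ioo_mem_nhdsGT (by linarith)
  have hδ : Tendsto (fun σ => σ / (2 * Astar σ)) (𝓝[>] 1) (𝓝[>] 0) :=
    tendsto_nhdsWithin_iff.2 ⟨hδ0, hnear.mono fun σ hσ => (hδmem σ hσ).1⟩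
  have hscale := tendsto_sub_one_div_rpow_of_balance (by linarith) hnm hδ <| hnear.mono
    fun σ hσ => balance_of_hardcore_eq (by linarith) (by linarith) (by linarith [hσ.1])
      (hδmem σ hσ) (heq σ hσ)
  have hA : ∀ᶠ σ in 𝓝[>] 1, σ / 2 * (σ / (2 * Astar σ))⁻¹ = Astar σ := by
    filter_upwards [self_mem_nhdsWithin] with σ (hσ : 1 < σ)
    rw [inv_div]
    field_simp
  have hhalf : Tendsto (fun σ : ℝ => σ / 2) (𝓝[>] 1) (𝓝 (1 / 2)) :=
    (continuous_id.div_const 2).continuousWithinAt.tendsto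
  refine ⟨(hhalf.mul (hscale.rpow_const (Or.inr (by positivity)))).congr' ?_,
    (hhalf.pos_mul_atTop (by norm_num) hδ.inv_tendsto_nhdsGT_zero).congr' hA⟩
  filter_upwards [hA, hnear] with σ hAσ hσ
  have hδσ := (hδmem σ hσ).1
  rw [div_rpow (by linarith [hσ.1]) (by positivity), one_div, rpow_rpow_inv hδσ.le (by linarith),
    ← hAσ]
  field_simp

/-- For `n > m > 1` and a hard-core radius `σ ∈ (1, 1+η)`, if
`A* : (1,1+η) → (0,∞)` satisfies, with `δ*(σ) = σ/(2A*(σ)) ∈ (0,1/2)` and `δ*(σ) → 0`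
as `σ → 1⁺`, the equation
`(A*(σ))^{m−n} = 2^{n−m}·[ζ(m+1,1−δ*) − ζ(m+1,δ*)]/[ζ(n+1,1−δ*) − ζ(n+1,δ*)]`,
then `lim_{σ→1⁺} A*(σ)·(σ−1)^{1/(m+2)} = (1/2)·(2(m+1)ζ(m+2)/(n−m))^{1/(m+2)}`;
in particular `A*(σ)` diverges as `σ → 1⁺` with the non-universal exponent `1/(m+2)`. -/
theorem hardcore_Astar_asymptotics
    (n m η : ℝ) (hm : 1 < m) (hnm : m < n) (hη : 0 < η)
    (Astar : ℝ → ℝ)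
    (hpos : ∀ σ ∈ Set.Ioo (1 : ℝ) (1 + η), 0 < Astar σ)
    (hδmem : ∀ σ ∈ Set.Ioo (1 : ℝ) (1 + η),
      σ / (2 * Astar σ) ∈ Set.Ioo (0 : ℝ) (1 / 2))
    (hδ0 : Tendsto (fun σ : ℝ => σ / (2 * Astar σ))
      (nhdsWithin 1 (Set.Ioi 1)) (nhds 0))
    (heq : ∀ σ ∈ Set.Ioo (1 : ℝ) (1 + η),
      (Astar σ) ^ (m - n) = 2 ^ (n - m) *
        (hzeta (m + 1) (1 - σ / (2 * Astar σ)) - hzeta (m + 1) (σ / (2 * Astar σ))) /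
        (hzeta (n + 1) (1 - σ / (2 * Astar σ)) - hzeta (n + 1) (σ / (2 * Astar σ)))) :
    Tendsto (fun σ : ℝ => Astar σ * (σ - 1) ^ (1 / (m + 2)))
      (nhdsWithin 1 (Set.Ioi 1))
      (nhds ((1 / 2) * (2 * (m + 1) * rzeta (m + 2) / (n - m)) ^ (1 / (m + 2)))) ∧
    Tendsto Astar (nhdsWithin 1 (Set.Ioi 1)) atTop :=
  hardcore_Astar_asymptotics_general n m η hm hnm hη Astar hδmem hδ0 heq
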